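/- arXiv:2505.18193 — 5 statements merged into one kernel-verified Lean document; each statement's English description precedes it below -/
import Mathlib

section
/- Fix t ∈ [0,1] and Borel probability measures p and q on U. Writing γ_{x₀,x₁}(t) := φ⁻¹((1−t)φ(x₀) + t φ(x₁)) and γ'_{x₀,x₁}(t) for its time derivative, the Riemannian conditional flow-matching integrand integrates to the Euclidean one under the pushforward measures: ∫_{U×U} ‖Dφ(γ_{x₀,x₁}(t))( u_M(t, γ_{x₀,x₁}(t)) − γ'_{x₀,x₁}(t) )‖² d(p ⊗ q)(x₀, x₁) = ∫_{E×E} ‖u_E(t, (1−t)z₀ + t z₁) − (z₁ − z₀)‖² d((φ_#p) ⊗ (φ_#q))(z₀, z₁), where φ_#p denotes the pushforward (image) measure of p under φ, assuming the integrand is measurable. -/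
/-!
Along the conditional path `γ = ψ ∘ c`, where `c s = (1 - s) • φ x₀ + s • φ x₁` is the straight
segment in `E`, the chain rule applied to `φ ∘ γ = c` gives `Dφ (γ t) (γ' t) = φ x₁ - φ x₀`.
Hence the Riemannian integrand is the Euclidean one composed with `φ × φ`. Since `p ⊗ q` is
concentrated on `U × U`, restricting to `U × U` changes nothing, and the change of variables
`(φ × φ)_# (p ⊗ q) = φ_# p ⊗ φ_# q` turns one integral into the other.
-/

open MeasureTheory

section Velocity

variable {F E : Type*} [NormedAddCommGroup F] [NormedSpace ℝ F]
  [NormedAddCommGroup E] [NormedSpace ℝ E]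

theorem hasDerivAt_one_sub_smul_add_smul (a b : E) (t : ℝ) :
    HasDerivAt (fun s : ℝ => (1 - s) • a + s • b) (b - a) t := by
  rw [← funext (AffineMap.lineMap_apply_module (k := ℝ) a b)]
  exact AffineMap.hasDerivAt_lineMap

theorem HasFDerivAt.apply_velocity_eq_of_leftInverse {φ : F → E} {ψ : E → F}
    (hφψ : Function.LeftInverse φ ψ) {c : ℝ → E} {c' : E} {t : ℝ} (hc : HasDerivAt c c' t)
    {L : F →L[ℝ] E} (hL : HasFDerivAt φ L (ψ (c t))) {v : F}
    (hv : HasDerivAt (fun s => ψ (c s)) v t) : L v = c' := by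
  have hcomp : HasDerivAt (fun s => φ (ψ (c s))) (L v) t := hL.comp_hasDerivAt t hv
  simp only [hφψ _] at hcomp
  exact hcomp.unique hc

end Velocity

theorem ae_mem_prod_of_measure_compl_eq_zero {α β : Type*} [MeasurableSpace α]
    [MeasurableSpace β] {μ : Measure α} {ν : Measure β} {s : Set α} {t : Set β}
    (hs : μ sᶜ = 0) (ht : ν tᶜ = 0) : ∀ᵐ x ∂μ.prod ν, x ∈ s ×ˢ t :=
  (Measure.quasiMeasurePreserving_fst.ae (ae_iff.2 hs)).and
    (Measure.quasiMeasurePreserving_snd.ae (ae_iff.2 ht))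

theorem setIntegral_eq_integral_map_of_ae_mem {α β G : Type*} [MeasurableSpace α]
    [MeasurableSpace β] [NormedAddCommGroup G] [NormedSpace ℝ G] {μ : Measure α} {s : Set α}
    (hs : ∀ᵐ x ∂μ, x ∈ s) {f : α → β} (hf : AEMeasurable f μ) {g : β → G}
    (hg : AEStronglyMeasurable g (μ.map f)) {h : α → G} (hh : ∀ x ∈ s, h x = g (f x)) :
    ∫ x in s, h x ∂μ = ∫ y, g y ∂μ.map f := by
  rw [Measure.restrict_eq_self_of_ae_mem hs, integral_map hf hg]
  exact integral_congr_ae (hs.mono hh)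

theorem diffeoCFM_loss_eq_general
    {F E : Type*} [NormedAddCommGroup F] [NormedSpace ℝ F]
    [NormedAddCommGroup E] [InnerProductSpace ℝ E]
    [MeasurableSpace F] [MeasurableSpace E]
    (U : Set F)
    (φ : F → E) (ψ : E → F)
    (hφψ : ∀ z : E, φ (ψ z) = z)
    (hψU : ∀ z : E, ψ z ∈ U)
    (Dφ : F → (F →L[ℝ] E))
    (hDφ : ∀ x ∈ U, HasFDerivAt φ (Dφ x) x)
    (uM : ℝ → F → F) (uE : ℝ → E → E)
    (huE : ∀ t z, uE t z = Dφ (ψ z) (uM t (ψ z)))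
    (t : ℝ)
    (p q : MeasureTheory.Measure F)
    [MeasureTheory.IsProbabilityMeasure p] [MeasureTheory.IsProbabilityMeasure q]
    (hp : p Uᶜ = 0) (hq : q Uᶜ = 0)
    (hφm : Measurable φ)
    -- the curve `γ_{x₀,x₁}` and its time derivative `γ'_{x₀,x₁}` at time `t`
    (γ : F → F → F) (hγ : ∀ x₀ x₁, γ x₀ x₁ = ψ ((1 - t) • φ x₀ + t • φ x₁))
    (γ' : F → F → F)
    (hγ' : ∀ x₀ x₁, HasDerivAt (fun s : ℝ => ψ ((1 - s) • φ x₀ + s • φ x₁)) (γ' x₀ x₁) t)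
    -- measurability of the integrands
    (hmeas₂ : Measurable fun z : E × E =>
      ‖uE t ((1 - t) • z.1 + t • z.2) - (z.2 - z.1)‖ ^ 2) :
    ∫ x : F × F in U ×ˢ U,
        ‖Dφ (γ x.1 x.2) (uM t (γ x.1 x.2) - γ' x.1 x.2)‖ ^ 2 ∂(p.prod q)
      = ∫ z : E × E,
        ‖uE t ((1 - t) • z.1 + t • z.2) - (z.2 - z.1)‖ ^ 2
          ∂((p.map φ).prod (q.map φ)) := by
  rw [Measure.map_prod_map p q hφm hφm]
  refine setIntegral_eq_integral_map_of_ae_mem (ae_mem_prod_of_measure_compl_eq_zero hp hq)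
    (hφm.prodMap hφm).aemeasurable hmeas₂.aestronglyMeasurable fun x _ => ?_
  have hvel : Dφ (γ x.1 x.2) (γ' x.1 x.2) = φ x.2 - φ x.1 := by
    rw [hγ]
    exact HasFDerivAt.apply_velocity_eq_of_leftInverse hφψ
      (hasDerivAt_one_sub_smul_add_smul _ _ t) (hDφ _ (hψU _)) (hγ' x.1 x.2)
  rw [Prod.map_fst, Prod.map_snd, map_sub, hvel, huE, hγ]

/-- The Riemannian conditional flow-matching integrand integrates (over `U × U`
under `p ⊗ q`) to the Euclidean one (over `E × E` under `(φ#p) ⊗ (φ#q)`). -/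
theorem diffeoCFM_loss_eq
    {F E : Type*} [NormedAddCommGroup F] [NormedSpace ℝ F] [FiniteDimensional ℝ F]
    [NormedAddCommGroup E] [InnerProductSpace ℝ E] [FiniteDimensional ℝ E]
    [MeasurableSpace F] [BorelSpace F] [MeasurableSpace E] [BorelSpace E]
    (U : Set F) (hU : IsOpen U)
    (φ : F → E) (ψ : E → F)
    (hψφ : ∀ x ∈ U, ψ (φ x) = x) (hφψ : ∀ z : E, φ (ψ z) = z)
    (hψU : ∀ z : E, ψ z ∈ U)
    (Dφ : F → (F →L[ℝ] E))
    (hDφ : ∀ x ∈ U, HasFDerivAt φ (Dφ x) x)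
    (hDφc : ContinuousOn Dφ U)
    (hψc : Continuous ψ) (hψd : ∀ z : E, DifferentiableAt ℝ ψ z)
    (uM : ℝ → F → F) (uE : ℝ → E → E)
    (huE : ∀ t z, uE t z = Dφ (ψ z) (uM t (ψ z)))
    (t : ℝ) (ht : t ∈ Set.Icc (0 : ℝ) 1)
    (p q : MeasureTheory.Measure F)
    [MeasureTheory.IsProbabilityMeasure p] [MeasureTheory.IsProbabilityMeasure q]
    (hp : p Uᶜ = 0) (hq : q Uᶜ = 0)
    (hφm : Measurable φ)
    -- the curve `γ_{x₀,x₁}` and its time derivative `γ'_{x₀,x₁}` at time `t`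
    (γ : F → F → F) (hγ : ∀ x₀ x₁, γ x₀ x₁ = ψ ((1 - t) • φ x₀ + t • φ x₁))
    (γ' : F → F → F)
    (hγ' : ∀ x₀ x₁, HasDerivAt (fun s : ℝ => ψ ((1 - s) • φ x₀ + s • φ x₁)) (γ' x₀ x₁) t)
    -- measurability of the integrands
    (hmeas₁ : Measurable fun x : F × F =>
      ‖Dφ (γ x.1 x.2) (uM t (γ x.1 x.2) - γ' x.1 x.2)‖ ^ 2)
    (hmeas₂ : Measurable fun z : E × E =>
      ‖uE t ((1 - t) • z.1 + t • z.2) - (z.2 - z.1)‖ ^ 2) :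
    ∫ x : F × F in U ×ˢ U,
        ‖Dφ (γ x.1 x.2) (uM t (γ x.1 x.2) - γ' x.1 x.2)‖ ^ 2 ∂(p.prod q)
      = ∫ z : E × E,
        ‖uE t ((1 - t) • z.1 + t • z.2) - (z.2 - z.1)‖ ^ 2
          ∂((p.map φ).prod (q.map φ)) :=
  diffeoCFM_loss_eq_general U φ ψ hφψ hψU Dφ hDφ uM uE huE t p q hp hq hφm γ hγ γ' hγ' hmeas₂
end

section
/- One explicit midpoint (second-order Runge–Kutta) step of the ODE on U, performed with the pullback exponential map and pullback parallel transport, equals the image under φ⁻¹ of the Euclidean midpoint step: suppose x_ℓ = φ⁻¹(z_ℓ) for some z_ℓ ∈ E, t_ℓ ∈ [0,1], h > 0. Set k₁ᴹ := u_M(t_ℓ, x_ℓ), x_A := exp_{x_ℓ}((h/2) k₁ᴹ), k₂ᴹ := u_M(t_ℓ + h/2, x_A), and x_{ℓ+1} := exp_{x_ℓ}( h · PT_{x_A → x_ℓ}(k₂ᴹ) ). Correspondingly set k₁ᴱ := u_E(t_ℓ, z_ℓ) and z_{ℓ+1} := z_ℓ + h · u_E(t_ℓ + h/2, z_ℓ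 + (h/2) k₁ᴱ). Then x_{ℓ+1} = φ⁻¹(z_{ℓ+1}). -/
/-!
Because `φ ∘ φ⁻¹ = id`, the pullback exponential at `x = φ⁻¹ z` is `ξ ↦ φ⁻¹ (z + Dφ(x) ξ)`, and by
the chain rule `Dφ(φ⁻¹ z)` is a left inverse of `Dφ⁻¹(z)`, so transporting a vector from `y` to `x`
and then exponentiating is `φ⁻¹` of the Euclidean step along its pushforward by `Dφ(y)`. Both stages
of the midpoint step on `U` are therefore `φ⁻¹` of the Euclidean stages, with `k_iᴹ` pushed forward
to `k_iᴱ`.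
-/

section

variable {𝕜 F E : Type*} [NontriviallyNormedField 𝕜]
  [NormedAddCommGroup F] [NormedSpace 𝕜 F] [NormedAddCommGroup E] [NormedSpace 𝕜 E]

theorem HasFDerivAt.apply_apply_of_leftInverse {φ : F → E} {ψ : E → F}
    {φ' : F →L[𝕜] E} {ψ' : E →L[𝕜] F} {z : E} (hφψ : Function.LeftInverse φ ψ)
    (hφ : HasFDerivAt φ φ' (ψ z)) (hψ : HasFDerivAt ψ ψ' z) (v : E) :
    φ' (ψ' v) = v := by
  have hid : φ ∘ ψ = id := funext hφψ
  have hcomp : φ'.comp ψ' = ContinuousLinearMap.id 𝕜 E :=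
    (hφ.comp z hψ).unique (hid ▸ hasFDerivAt_id z)
  exact congrArg (· v) hcomp

namespace Pullback

def exp (φ : F → E) (ψ : E → F) (Dφ : F → F →L[𝕜] E) (x ξ : F) : F :=
  ψ (φ x + Dφ x ξ)

def transport (φ : F → E) (Dφ : F → F →L[𝕜] E) (Dψ : E → E →L[𝕜] F) (y x η : F) : F :=
  Dψ (φ x) (Dφ y η)

variable {φ : F → E} {ψ : E → F} {Dφ : F → F →L[𝕜] E} {Dψ : E → E →L[𝕜] F}

theorem exp_smul_apply (hφψ : Function.LeftInverse φ ψ) (z : E) (c : 𝕜) (ξ : F) :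
    exp φ ψ Dφ (ψ z) (c • ξ) = ψ (z + c • Dφ (ψ z) ξ) := by
  rw [exp, hφψ z, map_smul]

theorem exp_smul_transport {z : E} (hφψ : Function.LeftInverse φ ψ)
    (hDφ : HasFDerivAt φ (Dφ (ψ z)) (ψ z)) (hDψ : HasFDerivAt ψ (Dψ z) z)
    (c : 𝕜) (y : F) (η : F) :
    exp φ ψ Dφ (ψ z) (c • transport φ Dφ Dψ y (ψ z) η) = ψ (z + c • Dφ y η) := by
  rw [exp_smul_apply hφψ, transport, hφψ z, hDφ.apply_apply_of_leftInverse hφψ hDψ]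

end Pullback

end

open Pullback in
theorem pullback_midpoint_step_equiv_general
    {F E : Type*} [NormedAddCommGroup F] [NormedSpace ℝ F]
    [NormedAddCommGroup E] [NormedSpace ℝ E]
    (U : Set F)
    (φ : F → E) (ψ : E → F)
    (hφψ : ∀ z : E, φ (ψ z) = z)
    (hψU : ∀ z : E, ψ z ∈ U)
    (Dφ : F → (F →L[ℝ] E)) (Dψ : E → (E →L[ℝ] F))
    (hDφ : ∀ x ∈ U, HasFDerivAt φ (Dφ x) x)
    (hDψ : ∀ z : E, HasFDerivAt ψ (Dψ z) z)
    (uM : ℝ → F → F) (uE : ℝ → E → E)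
    (huE : ∀ t z, uE t z = Dφ (ψ z) (uM t (ψ z)))
    -- pullback exponential map
    (expM : F → F → F) (hexpM : ∀ x ξ, expM x ξ = ψ (φ x + Dφ x ξ))
    -- pullback parallel transport from `y` to `x`: `(Dφ x)⁻¹ = Dψ (φ x)`
    (PT : F → F → F → F) (hPT : ∀ y x η, PT y x η = Dψ (φ x) (Dφ y η))
    (xl : F) (zl : E) (hxl : xl = ψ zl)
    (tl : ℝ) (h : ℝ) :
    let k₁M := uM tl xl
    let xA := expM xl ((h / 2) • k₁M)
    let k₂M := uM (tl + h / 2) xA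
    let xnext := expM xl (h • PT xA xl k₂M)
    let k₁E := uE tl zl
    let znext := zl + h • uE (tl + h / 2) (zl + (h / 2) • k₁E)
    xnext = ψ znext := by
  intro k₁M xA k₂M xnext k₁E znext
  obtain rfl : expM = exp φ ψ Dφ := funext₂ hexpM
  obtain rfl : PT = transport φ Dφ Dψ := funext₃ hPT
  subst hxl
  have hk₁ : k₁E = Dφ (ψ zl) k₁M := huE tl zl
  have hxA : xA = ψ (zl + (h / 2) • k₁E) := hk₁ ▸ exp_smul_apply hφψ zl _ _
  calc xnext = ψ (zl + h • Dφ xA k₂M) :=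
        exp_smul_transport hφψ (hDφ _ (hψU zl)) (hDψ zl) h xA k₂M
    _ = ψ (zl + h • uE (tl + h / 2) (zl + (h / 2) • k₁E)) := by rw [huE, ← hxA]

/-- One explicit midpoint (RK2) step on `U`, performed with the pullback
exponential map and pullback parallel transport, equals the image under `φ⁻¹` of the
Euclidean midpoint step. -/
theorem pullback_midpoint_step_equiv
    {F E : Type*} [NormedAddCommGroup F] [NormedSpace ℝ F] [FiniteDimensional ℝ F]
    [NormedAddCommGroup E] [NormedSpace ℝ E] [FiniteDimensional ℝ E]
    (U : Set F) (hU : IsOpen U)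
    (φ : F → E) (ψ : E → F)
    (hψφ : ∀ x ∈ U, ψ (φ x) = x) (hφψ : ∀ z : E, φ (ψ z) = z)
    (hψU : ∀ z : E, ψ z ∈ U)
    (Dφ : F → (F →L[ℝ] E)) (Dψ : E → (E →L[ℝ] F))
    (hDφ : ∀ x ∈ U, HasFDerivAt φ (Dφ x) x)
    (hDψ : ∀ z : E, HasFDerivAt ψ (Dψ z) z)
    (hDφc : ContinuousOn Dφ U) (hDψc : Continuous Dψ)
    (uM : ℝ → F → F) (uE : ℝ → E → E)
    (huE : ∀ t z, uE t z = Dφ (ψ z) (uM t (ψ z)))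
    -- pullback exponential map
    (expM : F → F → F) (hexpM : ∀ x ξ, expM x ξ = ψ (φ x + Dφ x ξ))
    -- pullback parallel transport from `y` to `x`: `(Dφ x)⁻¹ = Dψ (φ x)`
    (PT : F → F → F → F) (hPT : ∀ y x η, PT y x η = Dψ (φ x) (Dφ y η))
    (xl : F) (zl : E) (hxl : xl = ψ zl)
    (tl : ℝ) (htl : tl ∈ Set.Icc (0 : ℝ) 1) (h : ℝ) (hh : 0 < h) :
    let k₁M := uM tl xl
    let xA := expM xl ((h / 2) • k₁M)
    let k₂M := uM (tl + h / 2) xA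
    let xnext := expM xl (h • PT xA xl k₂M)
    let k₁E := uE tl zl
    let znext := zl + h • uE (tl + h / 2) (zl + (h / 2) • k₁E)
    xnext = ψ znext :=
  pullback_midpoint_step_equiv_general U φ ψ hφψ hψU Dφ Dψ hDφ hDψ uM uE huE expM hexpM PT hPT xl zl
    hxl tl h
end

section
/- One explicit fourth-order Runge–Kutta (RK4) step of the ODE on U, performed with the pullback exponential map and pullback parallel transport, equals the image under φ⁻¹ of the Euclidean RK4 step. Precisely, suppose x_ℓ = φ⁻¹(z_ℓ) for some z_ℓ ∈ E, t_ℓ ∈ [0,1], h > 0. Define on U: k₁ᴹ := u_M(t_ℓ, x_ℓ); x_A := exp_{x_ℓ}((h/2) k₁ᴹ); k₂ := PT_{x_A → x_ℓ}( u_M(t_ℓ + h/2, x_A) ); x_B := exp_{x_ℓ}((h/2) k₂); k₃ := PT_{x_B → x_ℓ}( u_M(t_ℓ + h/2, x_B) ); x_C := exp_{x_ℓ}(h k₃); k₄ := PT_{x_C → x_ℓ}( u_M(t_ℓ + h, x_C) ); and x_{ℓ+1} := exp_{x_ℓ}( (h/6)(k₁ᴹ + 2k₂ + 2k₃ + k₄)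 ). Define on E: k₁ᴱ := u_E(t_ℓ, z_ℓ); k₂ᴱ := u_E(t_ℓ + h/2, z_ℓ + (h/2) k₁ᴱ); k₃ᴱ := u_E(t_ℓ + h/2, z_ℓ + (h/2) k₂ᴱ); k₄ᴱ := u_E(t_ℓ + h, z_ℓ + h k₃ᴱ); and z_{ℓ+1} := z_ℓ + (h/6)(k₁ᴱ + 2k₂ᴱ + 2k₃ᴱ + k₄ᴱ). Then x_{ℓ+1} = φ⁻¹(z_{ℓ+1}). -/
/-!
In the chart `φ` everything is affine: `exp_{x_ℓ} ξ = φ⁻¹(z_ℓ + L ξ)` with `L = Dφ(x_ℓ)`, and by the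
chain rule applied to `φ ∘ φ⁻¹ = id`, `L ∘ PT_{y → x_ℓ} = Dφ(y)`. Hence `L` maps every stage slope
of the pullback scheme to the corresponding Euclidean stage slope `u_E`, and applying `L` to the
final increment yields the Euclidean RK4 increment.
-/

theorem HasFDerivAt.comp_eq_id_of_leftInverse {𝕜 E F : Type*} [NontriviallyNormedField 𝕜]
    [NormedAddCommGroup E] [NormedSpace 𝕜 E] [NormedAddCommGroup F] [NormedSpace 𝕜 F]
    {φ : F → E} {ψ : E → F} {A : F →L[𝕜] E} {B : E →L[𝕜] F} {z : E}
    (hφψ : Function.LeftInverse φ ψ) (hφ : HasFDerivAt φ A (ψ z)) (hψ : HasFDerivAt ψ B z) :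
    A.comp B = ContinuousLinearMap.id 𝕜 E :=
  (hφ.comp z hψ).unique <| by simpa only [hφψ.comp_eq_id] using hasFDerivAt_id z

theorem pullback_rk4_step_equiv_general
    {F E : Type*} [NormedAddCommGroup F] [NormedSpace ℝ F]
    [NormedAddCommGroup E] [NormedSpace ℝ E]
    (U : Set F)
    (φ : F → E) (ψ : E → F)
    (hφψ : ∀ z : E, φ (ψ z) = z)
    (hψU : ∀ z : E, ψ z ∈ U)
    (Dφ : F → (F →L[ℝ] E)) (Dψ : E → (E →L[ℝ] F))
    (hDφ : ∀ x ∈ U, HasFDerivAt φ (Dφ x) x)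
    (hDψ : ∀ z : E, HasFDerivAt ψ (Dψ z) z)
    (uM : ℝ → F → F) (uE : ℝ → E → E)
    (huE : ∀ t z, uE t z = Dφ (ψ z) (uM t (ψ z)))
    -- pullback exponential map
    (expM : F → F → F) (hexpM : ∀ x ξ, expM x ξ = ψ (φ x + Dφ x ξ))
    -- pullback parallel transport from `y` to `x`: `(Dφ x)⁻¹ = Dψ (φ x)`
    (PT : F → F → F → F) (hPT : ∀ y x η, PT y x η = Dψ (φ x) (Dφ y η))
    (xl : F) (zl : E) (hxl : xl = ψ zl)
    (tl : ℝ) (h : ℝ) :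
    let k₁M := uM tl xl
    let xA := expM xl ((h / 2) • k₁M)
    let k₂ := PT xA xl (uM (tl + h / 2) xA)
    let xB := expM xl ((h / 2) • k₂)
    let k₃ := PT xB xl (uM (tl + h / 2) xB)
    let xC := expM xl (h • k₃)
    let k₄ := PT xC xl (uM (tl + h) xC)
    let xnext := expM xl ((h / 6) • (k₁M + (2 : ℝ) • k₂ + (2 : ℝ) • k₃ + k₄))
    let k₁E := uE tl zl
    let k₂E := uE (tl + h / 2) (zl + (h / 2) • k₁E)
    let k₃E := uE (tl + h / 2) (zl + (h / 2) • k₂E)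
    let k₄E := uE (tl + h) (zl + h • k₃E)
    let znext := zl + (h / 6) • (k₁E + (2 : ℝ) • k₂E + (2 : ℝ) • k₃E + k₄E)
    xnext = ψ znext := by
  intro k₁M xA k₂ xB k₃ xC k₄ xnext k₁E k₂E k₃E k₄E znext
  subst hxl
  have hexp (ξ : F) : expM (ψ zl) ξ = ψ (zl + Dφ (ψ zl) ξ) := by rw [hexpM, hφψ]
  have hDφ_PT (y : F) (η : F) : Dφ (ψ zl) (PT y (ψ zl) η) = Dφ y η := by
    rw [hPT, hφψ, ← ContinuousLinearMap.comp_apply,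
      (hDφ _ (hψU zl)).comp_eq_id_of_leftInverse hφψ (hDψ zl), ContinuousLinearMap.id_apply]
  have hslope (t : ℝ) (w : E) : Dφ (ψ zl) (PT (ψ w) (ψ zl) (uM t (ψ w))) = uE t w := by
    rw [hDφ_PT, huE]
  have hk₁ : Dφ (ψ zl) k₁M = k₁E := (huE tl zl).symm
  simp only [xnext, k₂, k₃, k₄, xA, xB, xC, hexp, map_add, map_smul, hslope, hk₁]
  rfl

/-- One explicit fourth-order Runge--Kutta (RK4) step on `U`, performed with the
pullback exponential map and pullback parallel transport, equals the image under `φ⁻¹` of the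
Euclidean RK4 step. -/
theorem pullback_rk4_step_equiv
    {F E : Type*} [NormedAddCommGroup F] [NormedSpace ℝ F] [FiniteDimensional ℝ F]
    [NormedAddCommGroup E] [NormedSpace ℝ E] [FiniteDimensional ℝ E]
    (U : Set F) (hU : IsOpen U)
    (φ : F → E) (ψ : E → F)
    (hψφ : ∀ x ∈ U, ψ (φ x) = x) (hφψ : ∀ z : E, φ (ψ z) = z)
    (hψU : ∀ z : E, ψ z ∈ U)
    (Dφ : F → (F →L[ℝ] E)) (Dψ : E → (E →L[ℝ] F))
    (hDφ : ∀ x ∈ U, HasFDerivAt φ (Dφ x) x)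
    (hDψ : ∀ z : E, HasFDerivAt ψ (Dψ z) z)
    (hDφc : ContinuousOn Dφ U) (hDψc : Continuous Dψ)
    (uM : ℝ → F → F) (uE : ℝ → E → E)
    (huE : ∀ t z, uE t z = Dφ (ψ z) (uM t (ψ z)))
    -- pullback exponential map
    (expM : F → F → F) (hexpM : ∀ x ξ, expM x ξ = ψ (φ x + Dφ x ξ))
    -- pullback parallel transport from `y` to `x`: `(Dφ x)⁻¹ = Dψ (φ x)`
    (PT : F → F → F → F) (hPT : ∀ y x η, PT y x η = Dψ (φ x) (Dφ y η))
    (xl : F) (zl : E) (hxl : xl = ψ zl)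
    (tl : ℝ) (htl : tl ∈ Set.Icc (0 : ℝ) 1) (h : ℝ) (hh : 0 < h) :
    let k₁M := uM tl xl
    let xA := expM xl ((h / 2) • k₁M)
    let k₂ := PT xA xl (uM (tl + h / 2) xA)
    let xB := expM xl ((h / 2) • k₂)
    let k₃ := PT xB xl (uM (tl + h / 2) xB)
    let xC := expM xl (h • k₃)
    let k₄ := PT xC xl (uM (tl + h) xC)
    let xnext := expM xl ((h / 6) • (k₁M + (2 : ℝ) • k₂ + (2 : ℝ) • k₃ + k₄))
    let k₁E := uE tl zl
    let k₂E := uE (tl + h / 2) (zl + (h / 2) • k₁E)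
    let k₃E := uE (tl + h / 2) (zl + (h / 2) • k₂E)
    let k₄E := uE (tl + h) (zl + h • k₃E)
    let znext := zl + (h / 6) • (k₁E + (2 : ℝ) • k₂E + (2 : ℝ) • k₃E + k₄E)
    xnext = ψ znext :=
  pullback_rk4_step_equiv_general U φ ψ hφψ hψU Dφ Dψ hDφ hDψ uM uE huE expM hexpM PT hPT xl zl hxl
    tl h
end

section
/- The normalized Cholesky map is inverted by the inverse normalized Cholesky map on correlation matrices: for every real d×d symmetric positive definite matrix Σ with all diagonal entries equal to 1, nchol⁻¹( nchol(Σ) ) = Σ, where nchol(Σ) := diag(chol(Σ))⁻¹ chol(Σ) and nchol⁻¹(L) := D^{-1/2} L Lᵀ D^{-1/2} with D := diag(L Lᵀ). -/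
/-!
With `W := diag(L₀)⁻¹`, the normalized factor is `L = W L₀`, so `L Lᵀ = W Σ W`. Normalizing a
matrix to unit diagonal is invariant under conjugation by a positive diagonal matrix, and `Σ`
already has unit diagonal, so normalizing `W Σ W` returns `Σ`.
-/

namespace Matrix

variable {n : Type*} [Fintype n] [DecidableEq n]

theorem inv_diagonal_of_ne_zero {K : Type*} [Field K] {v : n → K} (hv : ∀ i, v i ≠ 0) :
    (diagonal v)⁻¹ = diagonal v⁻¹ := by
  refine inv_eq_right_inv ?_
  rw [diagonal_mul_diagonal, ← diagonal_one]
  exact congrArg diagonal (funext fun i => mul_inv_cancel₀ (hv i))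

theorem diagonal_mul_mul_transpose_diagonal_mul {R : Type*} [CommRing R] (w : n → R)
    (A : Matrix n n R) :
    diagonal w * A * (diagonal w * A)ᵀ = diagonal w * (A * Aᵀ) * diagonal w := by
  rw [transpose_mul, diagonal_transpose]
  noncomm_ring

/-- `D^{-1/2} M D^{-1/2}` with `D = diag M`; the paper's `nchol⁻¹ L` is `diagNormalize (L * Lᵀ)`. -/
noncomputable def diagNormalize (M : Matrix n n ℝ) : Matrix n n ℝ :=
  diagonal (fun i => (√(M i i))⁻¹) * M * diagonal (fun i => (√(M i i))⁻¹)

theorem diagNormalize_diagonal_mul_mul_diagonal (M : Matrix n n ℝ) {w : n → ℝ}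
    (hw : ∀ i, 0 < w i) :
    diagNormalize (diagonal w * M * diagonal w) = diagNormalize M := by
  have hsqrt : ∀ i, √(w i * M i i * w i) = w i * √(M i i) := fun i => by
    rw [mul_right_comm, Real.sqrt_mul (mul_self_nonneg _), Real.sqrt_mul_self (hw i).le]
  ext i j
  have hwi := (hw i).ne'
  have hwj := (hw j).ne'
  simp only [diagNormalize, diagonal_mul, mul_diagonal, hsqrt]
  field_simp

theorem diagNormalize_of_diag_eq_one {M : Matrix n n ℝ} (hM : ∀ i, M i i = 1) :
    diagNormalize M = M := by
  ext i j
  simp [diagNormalize, hM]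

end Matrix

open Matrix

theorem nchol_inv_nchol_general (d : ℕ)
    (S : Matrix (Fin d) (Fin d) ℝ)
    (hdiag : ∀ i, S i i = 1)
    (L₀ : Matrix (Fin d) (Fin d) ℝ)
    (hL₀diag : ∀ i, 0 < L₀ i i)
    (hchol : S = L₀ * L₀ᵀ)
    (L : Matrix (Fin d) (Fin d) ℝ)
    (hL : L = (Matrix.diagonal fun i => L₀ i i)⁻¹ * L₀) :
    (Matrix.diagonal fun i => (Real.sqrt ((L * Lᵀ) i i))⁻¹) * (L * Lᵀ) *
      (Matrix.diagonal fun i => (Real.sqrt ((L * Lᵀ) i i))⁻¹) = S := by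
  have hLLt : L * Lᵀ = diagonal (fun i => (L₀ i i)⁻¹) * S * diagonal (fun i => (L₀ i i)⁻¹) := by
    rw [hL, inv_diagonal_of_ne_zero fun i => (hL₀diag i).ne',
      diagonal_mul_mul_transpose_diagonal_mul, hchol]
    rfl
  change diagNormalize (L * Lᵀ) = S
  rw [hLLt, diagNormalize_diagonal_mul_mul_diagonal _ fun i => inv_pos.2 (hL₀diag i),
    diagNormalize_of_diag_eq_one hdiag]

/-- `nchol⁻¹ (nchol Σ) = Σ` for every correlation matrix `Σ` (SPD with unit
diagonal), where `chol Σ = L₀` is the Cholesky factor (`Σ = L₀ L₀ᵀ`, `L₀` lower triangular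
with strictly positive diagonal), `nchol Σ := diag(L₀)⁻¹ L₀`, and
`nchol⁻¹(L) := D^{-1/2} L Lᵀ D^{-1/2}` with `D := diag(L Lᵀ)`. -/
theorem nchol_inv_nchol (d : ℕ)
    (S : Matrix (Fin d) (Fin d) ℝ) (hS : S.PosDef) (hSsymm : S.IsSymm)
    (hdiag : ∀ i, S i i = 1)
    (L₀ : Matrix (Fin d) (Fin d) ℝ)
    (hL₀lower : ∀ i j : Fin d, i < j → L₀ i j = 0)
    (hL₀diag : ∀ i, 0 < L₀ i i)
    (hchol : S = L₀ * L₀ᵀ)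
    (L : Matrix (Fin d) (Fin d) ℝ)
    (hL : L = (Matrix.diagonal fun i => L₀ i i)⁻¹ * L₀) :
    (Matrix.diagonal fun i => (Real.sqrt ((L * Lᵀ) i i))⁻¹) * (L * Lᵀ) *
      (Matrix.diagonal fun i => (Real.sqrt ((L * Lᵀ) i i))⁻¹) = S :=
  nchol_inv_nchol_general d S hdiag L₀ hL₀diag hchol L hL
end

section
/- The inverse normalized Cholesky map is inverted by the normalized Cholesky map on unit lower-triangular matrices: for every real d×d lower-triangular matrix L with all diagonal entries equal to 1, nchol( nchol⁻¹(L) ) = L, where nchol⁻¹(L) := D^{-1/2} L Lᵀ D^{-1/2} with D := diag(L Lᵀ), and nchol(Σ) := diag(chol(Σ))⁻¹ chol(Σ). -/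
/-!
Scaling the rows of `L` by `f i = ((L Lᵀ) i i)^{-1/2}` gives the lower-triangular matrix
`diag(f) L` with positive diagonal `f` and with `(diag(f) L)(diag(f) L)ᵀ = nchol⁻¹(L)`. By
uniqueness of the Cholesky factor, `chol(nchol⁻¹ L) = diag(f) L`, whose diagonal is `f`; dividing
it out returns `L`.

Uniqueness of the Cholesky factor: if `A Aᵀ = B Bᵀ`, then `C = B⁻¹ A` is lower triangular with
`C Cᵀ = 1`, so `Cᵀ = C⁻¹` is lower triangular as well and `C` is diagonal; its entries satisfy
`cᵢ² = 1` and `Aᵢᵢ = Bᵢᵢ cᵢ`, so positivity forces `C = 1`.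
-/

open Matrix

namespace Matrix

variable {n R : Type*}

theorem mul_transpose_apply_self_pos [Fintype n] [Ring R] [LinearOrder R] [IsStrictOrderedRing R]
    {M : Matrix n n R} {i : n} (hi : M i i ≠ 0) : 0 < (M * Mᵀ) i i := by
  rw [mul_apply]
  exact Finset.sum_pos' (fun j _ => mul_self_nonneg (M i j))
    ⟨i, Finset.mem_univ i, mul_self_pos.2 hi⟩

variable [LinearOrder n]

theorem IsLowerTriangular.inv [Fintype n] [DecidableEq n] [CommRing R] {M : Matrix n n R}
    (hM : M.IsLowerTriangular) : M⁻¹.IsLowerTriangular := by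
  by_cases hdet : IsUnit M.det
  · have := M.invertibleOfIsUnitDet hdet
    exact blockTriangular_inv_of_blockTriangular hM
  · rw [nonsing_inv_apply_not_isUnit M hdet]
    exact blockTriangular_zero

theorem IsLowerTriangular.isDiag_of_isUpperTriangular [Zero R] {M : Matrix n n R}
    (hl : M.IsLowerTriangular) (hu : M.IsUpperTriangular) : M.IsDiag := fun _ _ hij =>
  hij.lt_or_gt.elim (fun h => hl h) (fun h => hu h)

theorem IsLowerTriangular.isDiag_of_mul_transpose_eq_one [Fintype n] [DecidableEq n] [CommRing R]
    {C : Matrix n n R} (hC : C.IsLowerTriangular) (h : C * Cᵀ = 1) : C.IsDiag := by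
  have hCt : Cᵀ.IsLowerTriangular := inv_eq_right_inv h ▸ hC.inv
  exact hC.isDiag_of_isUpperTriangular fun _ _ hij => hCt hij

theorem IsLowerTriangular.eq_of_mul_transpose_eq [Fintype n] [DecidableEq n]
    [Field R] [LinearOrder R] [IsStrictOrderedRing R]
    {A B : Matrix n n R} (hA : A.IsLowerTriangular) (hB : B.IsLowerTriangular)
    (hApos : ∀ i, 0 < A i i) (hBpos : ∀ i, 0 < B i i) (h : A * Aᵀ = B * Bᵀ) : A = B := by
  have hBdet : IsUnit B.det := by
    rw [det_of_isLowerTriangular B hB]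
    exact (Finset.prod_pos fun i _ => hBpos i).ne'.isUnit
  set C := B⁻¹ * A with hC
  have hBC : B * C = A := mul_nonsing_inv_cancel_left B A hBdet
  have hCCt : C * Cᵀ = 1 := calc
    C * Cᵀ = B⁻¹ * (A * Aᵀ) * B⁻¹ᵀ := by simp only [hC, transpose_mul, mul_assoc]
    _ = (B⁻¹ * B) * (B⁻¹ * B)ᵀ := by simp only [h, transpose_mul, mul_assoc]
    _ = 1 := by rw [nonsing_inv_mul B hBdet, transpose_one, one_mul]
  have hClower : C.IsLowerTriangular := hB.inv.mul hA
  have hCdiag : C = diagonal C.diag :=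
    ((isDiag_iff_diagonal_diag C).1 (hClower.isDiag_of_mul_transpose_eq_one hCCt)).symm
  generalize C.diag = c at hCdiag
  have hc : ∀ i, c i = 1 := by
    intro i
    have hBc : 0 < B i i * c i := by
      have := hApos i
      rwa [← hBC, hCdiag, mul_diagonal] at this
    have hcc : c i * c i = 1 := by
      simpa [hCdiag, diagonal_transpose, diagonal_mul_diagonal] using congrFun₂ hCCt i i
    have hcpos : 0 < c i := pos_of_mul_pos_right hBc (hBpos i).le
    exact (mul_self_eq_one_iff.1 hcc).resolve_right (by linarith)
  rw [← hBC, hCdiag, funext hc, diagonal_one, mul_one]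

end Matrix

/-- `nchol (nchol⁻¹ L) = L` for every real lower-triangular `L` with unit
diagonal, where `nchol⁻¹(L) := D^{-1/2} L Lᵀ D^{-1/2}` with `D := diag(L Lᵀ)`, and
`nchol Σ := diag(chol Σ)⁻¹ chol Σ`; here `L₀ = chol(nchol⁻¹ L)` is the Cholesky factor of
`nchol⁻¹ L` (lower triangular with strictly positive diagonal). -/
theorem nchol_nchol_inv (d : ℕ)
    (L : Matrix (Fin d) (Fin d) ℝ)
    (hLlower : ∀ i j : Fin d, i < j → L i j = 0)
    (hLdiag : ∀ i, L i i = 1)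
    (L₀ : Matrix (Fin d) (Fin d) ℝ)
    (hL₀lower : ∀ i j : Fin d, i < j → L₀ i j = 0)
    (hL₀diag : ∀ i, 0 < L₀ i i)
    (hchol : (Matrix.diagonal fun i => (Real.sqrt ((L * Lᵀ) i i))⁻¹) * (L * Lᵀ) *
        (Matrix.diagonal fun i => (Real.sqrt ((L * Lᵀ) i i))⁻¹) = L₀ * L₀ᵀ) :
    (Matrix.diagonal fun i => L₀ i i)⁻¹ * L₀ = L := by
  set f : Fin d → ℝ := fun i => (Real.sqrt ((L * Lᵀ) i i))⁻¹
  have hf : ∀ i, 0 < f i := fun i =>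
    inv_pos.2 (Real.sqrt_pos.2 (mul_transpose_apply_self_pos (by simp [hLdiag])))
  have hL₀ : diagonal f * L = L₀ := by
    refine IsLowerTriangular.eq_of_mul_transpose_eq ((blockTriangular_diagonal f).mul
      fun i j => hLlower i j) (fun i j => hL₀lower i j) (fun i => by simpa [hLdiag] using hf i)
      hL₀diag ?_
    rw [← hchol, transpose_mul, diagonal_transpose]
    simp only [mul_assoc]
  have hL₀_diag : (fun i => L₀ i i) = f := funext fun i => by simp [← hL₀, hLdiag]
  rw [hL₀_diag, ← hL₀, nonsing_inv_mul_cancel_left]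
  simpa [det_diagonal] using (Finset.prod_pos fun i _ => hf i).ne'
end
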